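/- Let (V, e_V) and (W, e_W) be absolute order unit spaces and φ : V → W a linear bijection. Then φ is a unital absolute value preserving map if and only if φ is a surjective order isometry. -/
import Mathlib



/-- An absolutely ordered space: a real ordered vector space `(V, P)` together with an
absolute value map `abs : V → P` satisfying axioms (a)–(e). -/
structure AbsOrderedSpace (V : Type*) [AddCommGroup V] [Module ℝ V] where
  /-- the positive cone -/
  P : Set V
  add_mem : ∀ u ∈ P, ∀ v ∈ P, u + v ∈ P
  smul_mem : ∀ (k : ℝ), 0 ≤ k → ∀ v ∈ P, k • v ∈ P
  /-- the absolute value map -/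
  abs : V → V
  abs_mem : ∀ v, abs v ∈ P
  /-- (a) -/
  abs_of_mem : ∀ v ∈ P, abs v = v
  /-- (b) -/
  abs_add_mem : ∀ v, abs v + v ∈ P
  abs_sub_mem : ∀ v, abs v - v ∈ P
  /-- (c) -/
  abs_smul : ∀ (k : ℝ) (v : V), abs (k • v) = |k| • abs v
  /-- (d) -/
  axiom_d : ∀ u v w : V, abs (u - v) = u + v → w ∈ P → v - w ∈ P → abs (u - w) = u + w
  /-- (e) -/
  axiom_e₁ : ∀ u v w : V, abs (u - v) = u + v → abs (u - w) = u + w →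
    abs (u - abs (v + w)) = u + abs (v + w)
  axiom_e₂ : ∀ u v w : V, abs (u - v) = u + v → abs (u - w) = u + w →
    abs (u - abs (v - w)) = u + abs (v - w)
/-- An absolute order unit space: an absolutely ordered space whose norm is the order unit
norm determined by an order unit `e`, with closed cone, satisfying
`‖v‖ ≤ max(‖u‖, ‖w‖)` for `u ≤ v ≤ w`, and in which orthogonality coincides with absolute
`∞`-orthogonality on the positive cone. -/
structure AbsOrderUnitSpace (V : Type*) [NormedAddCommGroup V] [NormedSpace ℝ V] extends
    AbsOrderedSpace V where
  /-- the order unit -/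
  e : V
  e_mem : e ∈ P
  cone_closed : IsClosed P
  /-- `e` is an order unit -/
  orderUnit : ∀ v : V, ∃ k : ℝ, 0 < k ∧ k • e + v ∈ P ∧ k • e - v ∈ P
  /-- the norm is the order unit norm determined by `e` -/
  norm_eq : ∀ v : V, ‖v‖ = sInf {k : ℝ | 0 < k ∧ k • e + v ∈ P ∧ k • e - v ∈ P}
  /-- condition (a): `‖v‖ ≤ max (‖u‖, ‖w‖)` whenever `u ≤ v ≤ w` -/
  norm_le_max : ∀ u v w : V, v - u ∈ P → w - v ∈ P → ‖v‖ ≤ max ‖u‖ ‖w‖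
  /-- condition (b): `⊥ = ⊥ᵃ_∞` on the positive cone -/
  perp_iff : ∀ u ∈ P, ∀ v ∈ P,
    (abs (u - v) = u + v ↔
      ∀ u₁ v₁ : V, u₁ ∈ P → u - u₁ ∈ P → v₁ ∈ P → v - v₁ ∈ P →
        ∀ α β : ℝ, ‖α • u₁ + β • v₁‖ = max ‖α • u₁‖ ‖β • v₁‖)

/-- `l_V(v) = inf {‖u‖ : u ∈ V⁺, u + v ∈ V⁺}`. -/
noncomputable def AbsOrderUnitSpace.ell {V : Type*} [NormedAddCommGroup V]
    [NormedSpace ℝ V] (A : AbsOrderUnitSpace V) (v : V) : ℝ :=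
  sInf {r : ℝ | ∃ u ∈ A.P, u + v ∈ A.P ∧ ‖u‖ = r}

namespace AbsOrderUnitSpace

variable {V : Type*} [NormedAddCommGroup V] [NormedSpace ℝ V] (A : AbsOrderUnitSpace V)

lemma zero_mem' : (0 : V) ∈ A.P := by
  simpa using A.smul_mem 0 le_rfl A.e A.e_mem

lemma S_nonempty (v : V) :
    {k : ℝ | 0 < k ∧ k • A.e + v ∈ A.P ∧ k • A.e - v ∈ A.P}.Nonempty := by
  obtain ⟨k, hk, h1, h2⟩ := A.orderUnit v
  exact ⟨k, hk, h1, h2⟩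

lemma S_bddBelow (v : V) :
    BddBelow {k : ℝ | 0 < k ∧ k • A.e + v ∈ A.P ∧ k • A.e - v ∈ A.P} :=
  ⟨0, fun k hk => hk.1.le⟩

lemma mem_S_of_lt {v : V} {k : ℝ} (h : ‖v‖ < k) :
    k ∈ {k : ℝ | 0 < k ∧ k • A.e + v ∈ A.P ∧ k • A.e - v ∈ A.P} := by
  rw [A.norm_eq] at h
  obtain ⟨k₀, hk₀, hlt⟩ := exists_lt_of_csInf_lt (A.S_nonempty v) h
  refine ⟨hk₀.1.trans hlt, ?_, ?_⟩
  · have h1 : k • A.e + v = (k - k₀) • A.e + (k₀ • A.e + v) := by module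
    rw [h1]
    exact A.add_mem _ (A.smul_mem _ (by linarith) _ A.e_mem) _ hk₀.2.1
  · have h1 : k • A.e - v = (k - k₀) • A.e + (k₀ • A.e - v) := by module
    rw [h1]
    exact A.add_mem _ (A.smul_mem _ (by linarith) _ A.e_mem) _ hk₀.2.2

lemma norm_e_le_one : ‖A.e‖ ≤ 1 := by
  refine le_of_forall_pos_le_add fun ε hε => ?_
  rw [A.norm_eq]
  refine csInf_le (A.S_bddBelow _) ⟨by linarith, ?_, ?_⟩
  · have h1 : (1 + ε) • A.e + A.e = (2 + ε) • A.e := by module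
    rw [h1]; exact A.smul_mem _ (by linarith) _ A.e_mem
  · have h1 : (1 + ε) • A.e - A.e = ε • A.e := by module
    rw [h1]; exact A.smul_mem _ hε.le _ A.e_mem

lemma T_nonempty (v : V) :
    {r : ℝ | ∃ u ∈ A.P, u + v ∈ A.P ∧ ‖u‖ = r}.Nonempty := by
  obtain ⟨k, hk, h1, _⟩ := A.orderUnit v
  exact ⟨‖k • A.e‖, k • A.e, A.smul_mem k hk.le _ A.e_mem, h1, rfl⟩

lemma T_bddBelow (v : V) :
    BddBelow {r : ℝ | ∃ u ∈ A.P, u + v ∈ A.P ∧ ‖u‖ = r} := by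
  refine ⟨0, fun r hr => ?_⟩
  obtain ⟨u, _, _, hu⟩ := hr
  exact hu ▸ norm_nonneg u

lemma ell_nonneg (v : V) : 0 ≤ A.ell v := by
  refine le_csInf (A.T_nonempty v) fun r hr => ?_
  obtain ⟨u, _, _, hu⟩ := hr
  exact hu ▸ norm_nonneg u

lemma ell_le_norm (v : V) : A.ell v ≤ ‖v‖ := by
  refine le_of_forall_pos_le_add fun ε hε => ?_
  have hk := A.mem_S_of_lt (v := v) (k := ‖v‖ + ε) (by linarith)
  have h1 : A.ell v ≤ ‖(‖v‖ + ε) • A.e‖ :=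
    csInf_le (A.T_bddBelow v)
      ⟨(‖v‖ + ε) • A.e, A.smul_mem _ (by positivity) _ A.e_mem, hk.2.1, rfl⟩
  calc A.ell v ≤ ‖(‖v‖ + ε) • A.e‖ := h1
    _ = (‖v‖ + ε) * ‖A.e‖ := by
        rw [norm_smul, Real.norm_eq_abs, abs_of_nonneg (by positivity)]
    _ ≤ (‖v‖ + ε) * 1 := by
        exact mul_le_mul_of_nonneg_left A.norm_e_le_one (by positivity)
    _ = ‖v‖ + ε := by ring

lemma norm_eq_max_ell (v : V) : ‖v‖ = max (A.ell v) (A.ell (-v)) := by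
  refine le_antisymm ?_ (max_le (A.ell_le_norm v) (by simpa using A.ell_le_norm (-v)))
  refine le_of_forall_pos_le_add fun ε hε => ?_
  obtain ⟨r₀, ⟨u₀, hu₀P, hu₀v, hn₀⟩, hr₀⟩ :=
    exists_lt_of_csInf_lt (A.T_nonempty v)
      (show sInf _ < A.ell v + ε from lt_add_of_pos_right _ hε)
  obtain ⟨r₁, ⟨u₁, hu₁P, hu₁v, hn₁⟩, hr₁⟩ :=
    exists_lt_of_csInf_lt (A.T_nonempty (-v))
      (show sInf _ < A.ell (-v) + ε from lt_add_of_pos_right _ hε)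
  have h1 : v - -u₀ ∈ A.P := by
    have : v - -u₀ = u₀ + v := by abel
    rw [this]; exact hu₀v
  have h2 : u₁ - v ∈ A.P := by
    have : u₁ - v = u₁ + -v := by abel
    rw [this]; exact hu₁v
  have h3 := A.norm_le_max (-u₀) v u₁ h1 h2
  rw [norm_neg] at h3
  have h4 : ‖u₀‖ < A.ell v + ε := hn₀ ▸ hr₀
  have h5 : ‖u₁‖ < A.ell (-v) + ε := hn₁ ▸ hr₁
  calc ‖v‖ ≤ max ‖u₀‖ ‖u₁‖ := h3
    _ ≤ max (A.ell v) (A.ell (-v)) + ε := by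
        rcases max_cases ‖u₀‖ ‖u₁‖ with ⟨h, _⟩ | ⟨h, _⟩ <;> rw [h]
        · exact le_trans h4.le (by gcongr; exact le_max_left _ _)
        · exact le_trans h5.le (by gcongr; exact le_max_right _ _)

lemma ell_eq_zero_iff (v : V) : A.ell v = 0 ↔ v ∈ A.P := by
  constructor
  · intro h
    have hv : v ∈ closure A.P := by
      rw [Metric.mem_closure_iff]
      intro ε hε
      obtain ⟨r, ⟨u, huP, huv, hn⟩, hr⟩ :=
        exists_lt_of_csInf_lt (A.T_nonempty v)
          (show sInf {r : ℝ | ∃ u ∈ A.P, u + v ∈ A.P ∧ ‖u‖ = r} < ε from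
            lt_of_le_of_lt (le_of_eq h) hε)
      refine ⟨u + v, huv, ?_⟩
      rw [dist_eq_norm]
      have : v - (u + v) = -u := by abel
      rw [this, norm_neg]
      exact hn ▸ hr
    rwa [A.cone_closed.closure_eq] at hv
  · intro h
    refine le_antisymm ?_ (A.ell_nonneg v)
    exact csInf_le (A.T_bddBelow v) ⟨0, A.zero_mem', by simpa using h, norm_zero⟩

lemma e_sub_mem {w : V} (hw : w ∈ A.P) (hn : ‖w‖ ≤ 1) : A.e - w ∈ A.P := by
  have hv : A.e - w ∈ closure A.P := by
    rw [Metric.mem_closure_iff]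
    intro ε hε
    have hk := A.mem_S_of_lt (v := w) (k := 1 + ε / 2) (by linarith)
    refine ⟨(1 + ε / 2) • A.e - w, hk.2.2, ?_⟩
    rw [dist_eq_norm]
    have h1 : A.e - w - ((1 + ε / 2) • A.e - w) = (-(ε / 2)) • A.e := by module
    rw [h1, norm_smul, Real.norm_eq_abs]
    have : |(-(ε / 2))| = ε / 2 := by rw [abs_neg, abs_of_nonneg (by linarith)]
    rw [this]
    calc ε / 2 * ‖A.e‖ ≤ ε / 2 * 1 :=
          mul_le_mul_of_nonneg_left A.norm_e_le_one (by linarith)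
      _ < ε := by linarith
  rwa [A.cone_closed.closure_eq] at hv

lemma eq_zero_of_mem_both {x : V} (hx : x ∈ A.P) (hx' : -x ∈ A.P) : x = 0 := by
  have hn : ‖x‖ ≤ 0 := by
    refine le_of_forall_pos_le_add fun ε hε => ?_
    rw [A.norm_eq]
    have h2 : ε • A.e - x = ε • A.e + -x := by abel
    refine le_trans (csInf_le (A.S_bddBelow _)
      ⟨hε, A.add_mem _ (A.smul_mem _ hε.le _ A.e_mem) _ hx,
        h2 ▸ A.add_mem _ (A.smul_mem _ hε.le _ A.e_mem) _ hx'⟩) (by linarith)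
  simpa using norm_le_zero_iff.mp hn

end AbsOrderUnitSpace


/-- A linear bijection between absolute order unit spaces is a unital absolute value
preserving map iff it is a (surjective) order isometry. -/
theorem unital_absPreserving_iff_orderIsometry {V W : Type*} [NormedAddCommGroup V]
    [NormedSpace ℝ V] [NormedAddCommGroup W] [NormedSpace ℝ W]
    (A : AbsOrderUnitSpace V) (B : AbsOrderUnitSpace W) (φ : V →ₗ[ℝ] W)
    (hbij : Function.Bijective φ) :
    (φ A.e = B.e ∧ ∀ v : V, φ (A.abs v) = B.abs (φ v)) ↔
      (∀ v : V, B.ell (φ v) = A.ell v) := by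
  constructor
  · rintro ⟨he, habs⟩ v
    -- φ maps the cone onto the cone
    have hP : ∀ x : V, x ∈ A.P ↔ φ x ∈ B.P := by
      intro x
      constructor
      · intro hx
        have h1 : φ x = B.abs (φ x) := by rw [← habs, A.abs_of_mem x hx]
        rw [h1]; exact B.abs_mem (φ x)
      · intro hx
        have h1 : φ (A.abs x) = φ x := by rw [habs, B.abs_of_mem _ hx]
        have h2 : A.abs x = x := hbij.injective h1
        rw [← h2]; exact A.abs_mem x
    -- φ is an isometry
    have hN : ∀ x : V, ‖φ x‖ = ‖x‖ := by
      intro x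
      rw [A.norm_eq, B.norm_eq]
      congr 1
      ext k
      have h1 : k • B.e + φ x = φ (k • A.e + x) := by
        rw [map_add, map_smul, he]
      have h2 : k • B.e - φ x = φ (k • A.e - x) := by
        rw [map_sub, map_smul, he]
      simp only [Set.mem_setOf_eq, h1, h2, ← hP]
    -- the two ell-sets coincide
    unfold AbsOrderUnitSpace.ell
    congr 1
    ext r
    constructor
    · rintro ⟨u, huQ, huv, hn⟩
      obtain ⟨u', rfl⟩ := hbij.surjective u
      refine ⟨u', (hP u').mpr huQ, ?_, by rw [← hN u']; exact hn⟩
      have : φ (u' + v) = φ u' + φ v := map_add φ u' v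
      exact (hP (u' + v)).mpr (this ▸ huv)
    · rintro ⟨u, huP, huv, hn⟩
      refine ⟨φ u, (hP u).mp huP, ?_, by rw [hN u]; exact hn⟩
      have : φ (u + v) = φ u + φ v := map_add φ u v
      exact this ▸ (hP (u + v)).mp huv
  · intro h
    -- φ is an order isomorphism
    have hP : ∀ x : V, x ∈ A.P ↔ φ x ∈ B.P := by
      intro x
      rw [← A.ell_eq_zero_iff, ← B.ell_eq_zero_iff, h x]
    -- φ is an isometry
    have hN : ∀ x : V, ‖φ x‖ = ‖x‖ := by
      intro x
      rw [A.norm_eq_max_ell, B.norm_eq_max_ell, h x, ← map_neg, h (-x)]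
    -- φ A.e = B.e
    have he : φ A.e = B.e := by
      have h1 : B.e - φ A.e ∈ B.P := by
        refine B.e_sub_mem ((hP A.e).mp A.e_mem) ?_
        rw [hN]; exact A.norm_e_le_one
      have h2 : φ A.e - B.e ∈ B.P := by
        obtain ⟨v, hv⟩ := hbij.surjective B.e
        have hvP : v ∈ A.P := (hP v).mpr (hv ▸ B.e_mem)
        have hvn : ‖v‖ ≤ 1 := by rw [← hN, hv]; exact B.norm_e_le_one
        have h3 : A.e - v ∈ A.P := A.e_sub_mem hvP hvn
        have h4 : φ (A.e - v) = φ A.e - B.e := by rw [map_sub, hv]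
        exact h4 ▸ (hP _).mp h3
      have h5 : -(B.e - φ A.e) ∈ B.P := by
        have : -(B.e - φ A.e) = φ A.e - B.e := by abel
        rw [this]; exact h2
      have := B.eq_zero_of_mem_both h1 h5
      have h6 : B.e = φ A.e := by
        have := sub_eq_zero.mp this
        exact this
      exact h6.symm
    refine ⟨he, fun v => ?_⟩
    -- the absolute value decomposition
    set a := A.abs v with ha
    set vp := (2⁻¹ : ℝ) • (a + v) with hvp
    set vm := (2⁻¹ : ℝ) • (a - v) with hvm
    have hvpP : vp ∈ A.P := A.smul_mem _ (by norm_num) _ (A.abs_add_mem v)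
    have hvmP : vm ∈ A.P := A.smul_mem _ (by norm_num) _ (A.abs_sub_mem v)
    have hsub : vp - vm = v := by rw [hvp, hvm]; module
    have hadd : vp + vm = a := by rw [hvp, hvm]; module
    have hperpV : A.abs (vp - vm) = vp + vm := by
      rw [hsub, hadd, ha]
    have hRHS := (A.perp_iff vp hvpP vm hvmP).mp hperpV
    have hperpW : B.abs (φ vp - φ vm) = φ vp + φ vm := by
      refine (B.perp_iff (φ vp) ((hP vp).mp hvpP) (φ vm) ((hP vm).mp hvmP)).mpr ?_
      intro w₁ w₂ hw₁ hd₁ hw₂ hd₂ α β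
      obtain ⟨u₁, rfl⟩ := hbij.surjective w₁
      obtain ⟨u₂, rfl⟩ := hbij.surjective w₂
      have hu₁ : u₁ ∈ A.P := (hP u₁).mpr hw₁
      have hu₂ : u₂ ∈ A.P := (hP u₂).mpr hw₂
      have hd₁' : vp - u₁ ∈ A.P := by
        refine (hP _).mpr ?_
        rw [map_sub]; exact hd₁
      have hd₂' : vm - u₂ ∈ A.P := by
        refine (hP _).mpr ?_
        rw [map_sub]; exact hd₂
      have key := hRHS u₁ u₂ hu₁ hd₁' hu₂ hd₂' α β
      have h1 : α • φ u₁ + β • φ u₂ = φ (α • u₁ + β • u₂) := by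
        rw [map_add, map_smul, map_smul]
      have h2 : α • φ u₁ = φ (α • u₁) := (map_smul φ α u₁).symm
      have h3 : β • φ u₂ = φ (β • u₂) := (map_smul φ β u₂).symm
      rw [h1, h2, h3, hN, hN, hN]
      exact key
    have h1 : φ vp - φ vm = φ v := by rw [← map_sub, hsub]
    have h2 : φ vp + φ vm = φ a := by rw [← map_add, hadd]
    rw [h1, h2] at hperpW
    exact hperpW.symm
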